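/- arXiv:1509.08218 — 2 statements merged into one kernel-verified Lean document; each statement's English description precedes it below -/
import Mathlib

section
/- Let d = r + s + t with r, s ≥ 2 and rs + 1 ≤ d, and let 1 ≤ m ≤ d−2. Then C(d+2, m+2) − C(d−r+1, m+2) − C(d−s+1, m+2) + C(d−r−s+1, m+2) > C(d+1, m+1) + C(d, m+1) − C(d−rs, m+1). -/
lemma sum_choose_range (n k a : ℕ) :
    ∑ i ∈ Finset.range a, (((n + i).choose k : ℤ)) =
      ((n + a).choose (k + 1) : ℤ) - (n.choose (k + 1) : ℤ) := by
  induction a with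
  | zero => simp
  | succ a ih =>
    rw [Finset.sum_range_succ, ih]
    have h : (n + (a + 1)).choose (k + 1) = (n + a).choose k + (n + a).choose (k + 1) := by
      have h2 : n + (a + 1) = (n + a) + 1 := by ring
      rw [h2, Nat.choose_succ_succ']
    rw [h]
    push_cast
    ring

lemma sum_range_mul_split (g : ℕ → ℤ) (r s : ℕ) :
    ∑ k ∈ Finset.range (r * s), g k =
      ∑ i ∈ Finset.range r, ∑ j ∈ Finset.range s, g (i * s + j) := by
  induction r with
  | zero => simp
  | succ r ih =>
    rw [Nat.succ_mul, Finset.sum_range_add, ih, Finset.sum_range_succ]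

theorem stmt11 (d r s t m : ℕ) (hr : 2 ≤ r) (hs : 2 ≤ s) (hd : d = r + s + t)
    (hrs : r * s + 1 ≤ d) (hm : 1 ≤ m) (hmd : m ≤ d - 2) :
    ((d + 2).choose (m + 2) : ℤ) - (d - r + 1).choose (m + 2)
        - (d - s + 1).choose (m + 2) + (d - r - s + 1).choose (m + 2)
      > ((d + 1).choose (m + 1) : ℤ) + d.choose (m + 1) - (d - r * s).choose (m + 1) := by
  subst hd
  obtain ⟨e, he, he1⟩ : ∃ e, e + r * s = r + s + t ∧ 1 ≤ e := by
    refine ⟨r + s + t - r * s, Nat.sub_add_cancel (by omega), Nat.le_sub_of_add_le (by omega)⟩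
  have hge : r + s + t - r * s = e := by rw [← he, Nat.add_sub_cancel]
  have e1 : r + s + t - r + 1 = s + t + 1 := by omega
  have e2 : r + s + t - s + 1 = r + t + 1 := by omega
  have e3 : r + s + t - r - s + 1 = t + 1 := by omega
  have hmd' : m ≤ r + s + t - 2 := hmd
  rw [e1, e2, e3, hge]
  -- pointwise comparison
  have hpt : ∀ i < r, ∀ j < s, ((e + (i * s + j)).choose m : ℤ) ≤ ((t + 1 + j + i).choose m : ℤ) := by
    intro i hi j hj
    have hle : e + (i * s + j) ≤ t + 1 + j + i := by
      have h1 : (0 : ℤ) ≤ ((r : ℤ) - i - 1) * ((s : ℤ) - 1) :=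
        mul_nonneg (by omega) (by omega)
      have he' : (e : ℤ) + r * s = r + s + t := by exact_mod_cast he
      have : (e : ℤ) + (i * s + j) ≤ t + 1 + j + i := by nlinarith [h1, he']
      exact_mod_cast this
    exact_mod_cast Nat.choose_le_choose m hle
  -- key combinatorial inequality
  have key : ∑ j ∈ Finset.range s, ∑ i ∈ Finset.range r, (((t + 1 + j + i).choose m : ℤ))
      > ∑ k ∈ Finset.range (r * s), (((e + k).choose m : ℤ)) := by
    rw [sum_range_mul_split (fun k => ((e + k).choose m : ℤ)) r s, Finset.sum_comm]
    apply Finset.sum_lt_sum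
    · intro i hi
      exact Finset.sum_le_sum fun j hj =>
        hpt i (Finset.mem_range.mp hi) j (Finset.mem_range.mp hj)
    · refine ⟨r - 2, Finset.mem_range.mpr (by omega), ?_⟩
      apply Finset.sum_lt_sum
      · intro j hj
        exact hpt (r - 2) (by omega) j (Finset.mem_range.mp hj)
      · refine ⟨s - 1, Finset.mem_range.mpr (by omega), ?_⟩
        have harg : e + ((r - 2) * s + (s - 1)) = r + t - 1 := by
          have h2 : (r - 2) * s + 2 * s = r * s := by
            rw [← Nat.add_mul, Nat.sub_add_cancel hr]
          obtain ⟨A, hA⟩ : ∃ A, (r - 2) * s = A := ⟨_, rfl⟩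
          obtain ⟨B, hB⟩ : ∃ B, r * s = B := ⟨_, rfl⟩
          rw [hA, hB] at h2
          rw [hB] at he
          rw [hA]
          omega
        have harg2 : t + 1 + (s - 1) + (r - 2) = r + s + t - 2 := by omega
        have hlt : (r + t - 1).choose m < (r + s + t - 2).choose m := by
          obtain ⟨m', rfl⟩ : ∃ m', m = m' + 1 := ⟨m - 1, by omega⟩
          have hx : r + s + t - 2 = (r + s + t - 3) + 1 := by omega
          have hstep : (r + s + t - 3).choose (m' + 1) < (r + s + t - 2).choose (m' + 1) := by
            rw [hx, Nat.choose_succ_succ']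
            have hpos : 0 < (r + s + t - 3).choose m' := Nat.choose_pos (by omega)
            omega
          have hmono : (r + t - 1).choose (m' + 1) ≤ (r + s + t - 3).choose (m' + 1) :=
            Nat.choose_le_choose _ (by omega)
          omega
        rw [harg, harg2]
        exact_mod_cast hlt
  -- identities
  have E1 : ((r + s + t + 2).choose (m + 2) : ℤ)
      = ((r + s + t + 1).choose (m + 1) : ℤ) + ((r + s + t + 1).choose (m + 2) : ℤ) := by
    rw [show r + s + t + 2 = (r + s + t + 1) + 1 from rfl, Nat.choose_succ_succ']
    push_cast; ring
  have E2 : ∑ j ∈ Finset.range s, (((r + t + 1 + j).choose (m + 1) : ℤ))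
      = ((r + s + t + 1).choose (m + 2) : ℤ) - ((r + t + 1).choose (m + 2) : ℤ) := by
    have h := sum_choose_range (r + t + 1) (m + 1) s
    rw [show r + t + 1 + s = r + s + t + 1 by ring] at h
    exact h
  have E3 : ∑ j ∈ Finset.range s, (((t + 1 + j).choose (m + 1) : ℤ))
      = ((s + t + 1).choose (m + 2) : ℤ) - ((t + 1).choose (m + 2) : ℤ) := by
    have h := sum_choose_range (t + 1) (m + 1) s
    rw [show t + 1 + s = s + t + 1 by ring] at h
    exact h
  have E5 : ∑ k ∈ Finset.range (r * s), (((e + k).choose m : ℤ))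
      = ((r + s + t).choose (m + 1) : ℤ) - (e.choose (m + 1) : ℤ) := by
    have h := sum_choose_range e m (r * s)
    rw [he] at h
    exact h
  have E4 : ∑ j ∈ Finset.range s, ∑ i ∈ Finset.range r, (((t + 1 + j + i).choose m : ℤ))
      = ∑ j ∈ Finset.range s, ((((r + t + 1 + j).choose (m + 1) : ℤ))
          - (((t + 1 + j).choose (m + 1) : ℤ))) := by
    refine Finset.sum_congr rfl fun j _ => ?_
    have h := sum_choose_range (t + 1 + j) m r
    rw [show t + 1 + j + r = r + t + 1 + j by ring] at h
    exact h
  rw [E4, Finset.sum_sub_distrib, E2, E3, E5] at key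
  linarith [key, E1]
end

section
/- For integers d ≥ m ≥ 2, C(d, m) − C(d, m+1) − C(d−2, m−2) = [(m² + d·m − (d−1)²) / ((m+1)·m)] · C(d−2, m−1). -/
theorem stmt12 (d m : ℕ) (hm : 2 ≤ m) (hmd : m ≤ d) :
    ((m : ℤ) + 1) * m * ((d.choose m : ℤ) - d.choose (m + 1) - (d - 2).choose (m - 2))
      = ((m : ℤ) ^ 2 + (d : ℤ) * m - ((d : ℤ) - 1) ^ 2) * (d - 2).choose (m - 1) := by
  obtain ⟨b, rfl⟩ : ∃ b, m = b + 2 := ⟨m - 2, by omega⟩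
  obtain ⟨a, rfl⟩ : ∃ a, d = a + 2 := ⟨d - 2, by omega⟩
  have hab : b ≤ a := by omega
  simp only [Nat.add_sub_cancel]
  have e1 : (b + 2) - 2 = b := by omega
  have e2 : (b + 2) - 1 = b + 1 := by omega
  rw [e2, show b + 2 + 1 = b + 3 from rfl]
  -- key integer identities
  have h1 : ((b : ℤ) + 1) * (b + 2) * ((a + 2).choose (b + 2) : ℤ)
      = ((a : ℤ) + 2) * (a + 1) * (a.choose b : ℤ) := by
    have k1 := Nat.add_one_mul_choose_eq a b
    have k2 := Nat.add_one_mul_choose_eq (a + 1) (b + 1)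
    push_cast [Nat.succ_eq_add_one] at k1 k2 ⊢
    nlinarith [k1, k2]
  have h2 : ((b : ℤ) + 3) * (b + 2) * ((a + 2).choose (b + 3) : ℤ)
      = ((a : ℤ) + 2) * (a + 1) * (a.choose (b + 1) : ℤ) := by
    have k1 := Nat.add_one_mul_choose_eq a (b + 1)
    have k2 := Nat.add_one_mul_choose_eq (a + 1) (b + 2)
    push_cast [Nat.succ_eq_add_one] at k1 k2 ⊢
    nlinarith [k1, k2]
  have h3 : ((b : ℤ) + 1) * (a.choose (b + 1) : ℤ) = ((a : ℤ) - b) * (a.choose b : ℤ) := by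
    have k := Nat.choose_succ_right_eq a b
    have : ((a.choose (b + 1) : ℤ)) * (b + 1) = (a.choose b : ℤ) * ((a : ℤ) - b) := by
      have hc : ((a - b : ℕ) : ℤ) = (a : ℤ) - b := by
        push_cast [Nat.cast_sub hab]; ring
      rw [← hc]; exact_mod_cast congrArg (Nat.cast : ℕ → ℤ) k
    linarith [this]
  have hb1 : ((b : ℤ) + 1) ≠ 0 := by positivity
  apply mul_left_cancel₀ hb1
  have hcast : ((b : ℤ) + 2 + 1) = (b : ℤ) + 3 := by ring
  push_cast
  linear_combination ((b : ℤ) + 3) * h1 - ((b : ℤ) + 1) * h2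
    + (-(((b:ℤ)+2)^2 + ((a:ℤ)+2)*((b:ℤ)+2) - ((a:ℤ)+1)^2) - ((a:ℤ)+2)*((a:ℤ)+1)) * h3
end
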